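/- Let k ≥ 2 and m ≥ (432k)² be integers with m − k even. Then ρ(K^{k−2}_{2,(m−k+2)/2}) = (1/2)·√(2m + 2·√(2k² − 2km + m² − 8k + 4m + 8)); equivalently, it is the largest root of x⁴ − m·x² + (1/2)km − (1/2)k² − m + 2k − 2 = 0, and moreover ρ(K^{k−2}_{2,(m−k+2)/2}) > √(m − k). -/

import Mathlib

open SimpleGraph

/-- The `l`-edge-connectivity of a graph: the minimum number of edges whose removal
leaves a graph with at least `l` connected components, if the graph has at least `l`
vertices; otherwise the number of vertices. -/
noncomputable def edgeConnL {V : Type*} (l : ℕ) (G : SimpleGraph V) : ℕ :=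
  if l ≤ Nat.card V then
    sInf {c : ℕ | ∃ F : Set (Sym2 V), F ⊆ G.edgeSet ∧ F.ncard = c ∧
      l ≤ Nat.card (G.deleteEdges F).ConnectedComponent}
  else Nat.card V

/-- A graph is minimally `(k,l)`-edge-connected if it is connected, its
`l`-edge-connectivity is at least `k`, and deleting any edge drops the
`l`-edge-connectivity below `k`. -/
def IsMinimallyKLEdgeConnected {V : Type*} (k l : ℕ) (G : SimpleGraph V) : Prop :=
  G.Connected ∧ k ≤ edgeConnL l G ∧
    ∀ e ∈ G.edgeSet, edgeConnL l (G.deleteEdges {e}) < k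

/-- The real adjacency matrix of a simple graph. -/
noncomputable def adjMat {V : Type*} (G : SimpleGraph V) : Matrix V V ℝ :=
  letI := Classical.decRel G.Adj
  G.adjMatrix ℝ

/-- The spectral radius of a graph: the largest (real) eigenvalue of its adjacency matrix. -/
noncomputable def specRad {V : Type*} [Fintype V] [DecidableEq V]
    (G : SimpleGraph V) : ℝ :=
  sSup (spectrum ℝ (adjMat G))

abbrev KbookV (p s : ℕ) : Type := (Unit ⊕ Unit) ⊕ (Fin s ⊕ Fin p)

/-- `K^{p}_{2,s}`: the graph obtained from the disjoint union of the star `K_{1,p}` and the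
complete bipartite graph `K_{2,s}` by identifying the centre of the star with one of the two
vertices of degree `s` of `K_{2,s}`.  Here `Sum.inl (Sum.inl _)` is the identified vertex,
`Sum.inl (Sum.inr _)` is the other vertex of the part of size two, `Fin s` is the part of
size `s` and `Fin p` are the pendant vertices. -/
def Kbook (p s : ℕ) : SimpleGraph (KbookV p s) :=
  SimpleGraph.fromRel (fun a b =>
    match a, b with
    | Sum.inl (Sum.inl _), Sum.inr _ => True
    | Sum.inl (Sum.inr _), Sum.inr (Sum.inl _) => True
    | _, _ => False)

/-!
For `μ ≠ 0`, the eigen-equations of `K^p_{2,s}` force every common neighbour of the two hubs to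
carry `(a + b)/μ` and every pendant vertex `a/μ`, where `a`, `b` are the values at the hubs; they
thus collapse to `μ²a = (s + p)a + sb`, `μ²b = sa + sb`. So the nonzero eigenvalues are exactly
the nonzero roots of the biquadratic `x⁴ − (p + 2s)x² + ps`, and the spectral radius is its largest
root `√((p + 2s + √(p² + 4s²))/2)`. Substituting `p = k − 2`, `2s = m − k + 2` gives the claimed
value, and `√(p² + 4s²) ≥ 2s` gives `ρ² ≥ 2s > m − k`.
-/

theorem Matrix.mem_spectrum_iff_exists_mulVec_eq_smul {K n : Type*} [Field K] [Fintype n]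
    [DecidableEq n] (A : Matrix n n K) (μ : K) :
    μ ∈ spectrum K A ↔ ∃ v ≠ 0, A.mulVec v = μ • v := by
  simp only [← Matrix.spectrum_toLin', ← Module.End.hasEigenvalue_iff_mem_spectrum,
    Module.End.hasEigenvalue_iff, Submodule.ne_bot_iff, Module.End.mem_eigenspace_iff,
    Matrix.toLin'_apply]
  exact ⟨fun ⟨v, h, h0⟩ => ⟨v, h0, h⟩, fun ⟨v, h0, h⟩ => ⟨v, h, h0⟩⟩

theorem isGreatest_biquadratic_roots {N P : ℝ} (hN : 0 ≤ N) (hP : 4 * P ≤ N ^ 2) :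
    IsGreatest {x : ℝ | x ^ 4 - N * x ^ 2 + P = 0} (√((N + √(N ^ 2 - 4 * P)) / 2)) := by
  set d := √(N ^ 2 - 4 * P)
  have hd : d ^ 2 = N ^ 2 - 4 * P := Real.sq_sqrt (by linarith)
  have hρ : √((N + d) / 2) ^ 2 = (N + d) / 2 := Real.sq_sqrt (by positivity)
  refine ⟨?_, fun x hx => ?_⟩
  · show _ = 0
    linear_combination (√((N + d) / 2) ^ 2 + (N + d) / 2 - N) * hρ + hd / 4
  · have hroot : x ^ 4 - N * x ^ 2 + P = 0 := hx
    have hfac : (x ^ 2 - (N + d) / 2) * (x ^ 2 - (N - d) / 2) = 0 := by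
      linear_combination hroot - hd / 4
    have hx2 : x ^ 2 ≤ (N + d) / 2 := by
      rcases mul_eq_zero.1 hfac with h | h <;> nlinarith [Real.sqrt_nonneg (N ^ 2 - 4 * P)]
    exact Real.le_sqrt_of_sq_le hx2

namespace Kbook

variable {p s : ℕ}

section mulVec

variable (v : KbookV p s → ℝ)

theorem mulVec_inl_inl :
    (adjMat (Kbook p s)).mulVec v (.inl (.inl ())) =
      ∑ i : Fin s, v (.inr (.inl i)) + ∑ j : Fin p, v (.inr (.inr j)) := by
  simp [adjMat, Matrix.mulVec, dotProduct, Fintype.sum_sum_type, Kbook, SimpleGraph.adjMatrix]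

theorem mulVec_inl_inr :
    (adjMat (Kbook p s)).mulVec v (.inl (.inr ())) = ∑ i : Fin s, v (.inr (.inl i)) := by
  simp [adjMat, Matrix.mulVec, dotProduct, Fintype.sum_sum_type, Kbook, SimpleGraph.adjMatrix]

theorem mulVec_inr_inl (i : Fin s) :
    (adjMat (Kbook p s)).mulVec v (.inr (.inl i)) = v (.inl (.inl ())) + v (.inl (.inr ())) := by
  simp [adjMat, Matrix.mulVec, dotProduct, Fintype.sum_sum_type, Kbook, SimpleGraph.adjMatrix]

theorem mulVec_inr_inr (j : Fin p) :
    (adjMat (Kbook p s)).mulVec v (.inr (.inr j)) = v (.inl (.inl ())) := by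
  simp [adjMat, Matrix.mulVec, dotProduct, Fintype.sum_sum_type, Kbook, SimpleGraph.adjMatrix]

end mulVec

theorem quartic_eq_zero_of_mem_spectrum (hs : 1 ≤ s) {μ : ℝ}
    (hμ : μ ∈ spectrum ℝ (adjMat (Kbook p s))) (hμ0 : μ ≠ 0) :
    μ ^ 4 - (p + 2 * s) * μ ^ 2 + p * s = 0 := by
  obtain ⟨v, hv0, hv⟩ := (Matrix.mem_spectrum_iff_exists_mulVec_eq_smul _ μ).1 hμ
  have hev (x : KbookV p s) : (adjMat (Kbook p s)).mulVec v x = μ * v x := congrFun hv x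
  set a := v (.inl (.inl ()))
  set b := v (.inl (.inr ()))
  set σ := ∑ i : Fin s, v (.inr (.inl i))
  set τ := ∑ j : Fin p, v (.inr (.inr j))
  have hS (i : Fin s) : μ * v (.inr (.inl i)) = a + b := by rw [← hev, mulVec_inr_inl]
  have hP (j : Fin p) : μ * v (.inr (.inr j)) = a := by rw [← hev, mulVec_inr_inr]
  have ha : μ * a = σ + τ := by rw [← hev, mulVec_inl_inl]
  have hb : μ * b = σ := by rw [← hev, mulVec_inl_inr]
  have hσ : μ * σ = s * (a + b) := by simp [σ, Finset.mul_sum, hS, mul_add]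
  have hτ : μ * τ = p * a := by simp [τ, Finset.mul_sum, hP]
  have ha2 : μ ^ 2 * a = (s + p) * a + s * b := by
    linear_combination μ * ha + hσ + hτ
  have hb2 : μ ^ 2 * b = s * a + s * b := by
    linear_combination μ * hb + hσ
  have ha0 : a ≠ 0 := by
    intro ha0
    have hb0 : b = 0 := by
      have hs' : (s : ℝ) ≠ 0 := by positivity
      simpa [ha0, hs'] using ha2
    apply hv0
    funext x
    rcases x with (⟨⟨⟩⟩ | ⟨⟨⟩⟩) | (i | j)
    · exact ha0
    · exact hb0
    · simpa [ha0, hb0, hμ0] using hS i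
    · simpa [ha0, hμ0] using hP j
  have key : (μ ^ 4 - (p + 2 * s) * μ ^ 2 + p * s) * a = 0 := by
    linear_combination (μ ^ 2 - s) * ha2 + s * hb2
  exact (mul_eq_zero.1 key).resolve_right ha0

theorem mem_spectrum_of_quartic_eq_zero {x : ℝ} (hx0 : x ≠ 0)
    (hx : x ^ 4 - (p + 2 * s) * x ^ 2 + p * s = 0) :
    x ∈ spectrum ℝ (adjMat (Kbook p s)) := by
  have hxs : x ^ 2 - s ≠ 0 := by
    intro h
    have hs0 : (s : ℝ) = 0 := by nlinarith
    exact hx0 (pow_eq_zero_iff two_ne_zero |>.1 (by linarith))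
  refine (Matrix.mem_spectrum_iff_exists_mulVec_eq_smul _ x).2
    ⟨fun
      | .inl (.inl ()) => x * (x ^ 2 - s)
      | .inl (.inr ()) => s * x
      | .inr (.inl _) => x ^ 2
      | .inr (.inr _) => x ^ 2 - s, ?_, ?_⟩
  · intro h
    exact mul_ne_zero hx0 hxs (congrFun h (.inl (.inl ())))
  · funext y
    rcases y with (⟨⟨⟩⟩ | ⟨⟨⟩⟩) | (i | j)
    · simp [mulVec_inl_inl]
      linear_combination -hx
    · simp [mulVec_inl_inr]
      ring
    · simp [mulVec_inr_inl]
      ring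
    · simp [mulVec_inr_inr]

theorem isGreatest_spectrum (hs : 1 ≤ s) :
    IsGreatest (spectrum ℝ (adjMat (Kbook p s))) (√((p + 2 * s + √(p ^ 2 + 4 * s ^ 2)) / 2)) := by
  have hdisc : ((p : ℝ) + 2 * s) ^ 2 - 4 * (p * s) = p ^ 2 + 4 * s ^ 2 := by ring
  obtain ⟨hroot, hmax⟩ := hdisc ▸ isGreatest_biquadratic_roots (N := p + 2 * s) (P := p * s)
    (by positivity) (by nlinarith)
  have hs' : (1 : ℝ) ≤ s := by exact_mod_cast hs
  refine ⟨mem_spectrum_of_quartic_eq_zero (by positivity) hroot, fun μ hμ => ?_⟩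
  by_cases hμ0 : μ = 0
  · exact hμ0 ▸ Real.sqrt_nonneg _
  · exact hmax (quartic_eq_zero_of_mem_spectrum hs hμ hμ0)

theorem specRad_eq (hs : 1 ≤ s) :
    specRad (Kbook p s) = √((p + 2 * s + √(p ^ 2 + 4 * s ^ 2)) / 2) :=
  (isGreatest_spectrum hs).csSup_eq

theorem isGreatest_quartic_roots_specRad (hs : 1 ≤ s) :
    IsGreatest {x : ℝ | x ^ 4 - (p + 2 * s) * x ^ 2 + p * s = 0} (specRad (Kbook p s)) := by
  have hdisc : ((p : ℝ) + 2 * s) ^ 2 - 4 * (p * s) = p ^ 2 + 4 * s ^ 2 := by ring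
  rw [specRad_eq hs, ← hdisc]
  exact isGreatest_biquadratic_roots (by positivity) (by nlinarith)

theorem sqrt_two_mul_le_specRad (hs : 1 ≤ s) : √(2 * s) ≤ specRad (Kbook p s) := by
  rw [specRad_eq hs]
  apply Real.sqrt_le_sqrt
  have : 2 * (s : ℝ) ≤ √(p ^ 2 + 4 * s ^ 2) :=
    Real.le_sqrt_of_sq_le (by nlinarith)
  linarith [(Nat.cast_nonneg p : (0 : ℝ) ≤ p)]

end Kbook

/-- Let `k ≥ 2` and `m ≥ (432k)²` with `m − k` even.  Then
`ρ(K^{k−2}_{2,(m−k+2)/2}) = √(2m + 2√(2k² − 2km + m² − 8k + 4m + 8)) / 2`; equivalently,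
it is the largest root of `x⁴ − m x² + (1/2)km − (1/2)k² − m + 2k − 2 = 0`, and moreover
`ρ(K^{k−2}_{2,(m−k+2)/2}) > √(m − k)`. -/
theorem spectral_radius_Kbook_size (k m : ℕ) (hk : 2 ≤ k) (hm : (432 * k) ^ 2 ≤ m)
    (hpar : (m - k) % 2 = 0) :
    specRad (Kbook (k - 2) ((m - k + 2) / 2)) =
      Real.sqrt (2 * (m : ℝ) +
        2 * Real.sqrt (2 * (k : ℝ) ^ 2 - 2 * (k : ℝ) * (m : ℝ) + (m : ℝ) ^ 2
          - 8 * (k : ℝ) + 4 * (m : ℝ) + 8)) / 2 ∧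
    IsGreatest {x : ℝ | x ^ 4 - (m : ℝ) * x ^ 2 + (1 / 2) * (k : ℝ) * (m : ℝ)
        - (1 / 2) * (k : ℝ) ^ 2 - (m : ℝ) + 2 * (k : ℝ) - 2 = 0}
      (specRad (Kbook (k - 2) ((m - k + 2) / 2))) ∧
    Real.sqrt ((m : ℝ) - (k : ℝ)) < specRad (Kbook (k - 2) ((m - k + 2) / 2)) := by
  have hkm : k ≤ m := (Nat.le_mul_of_pos_left k (by norm_num)).trans
    ((Nat.le_self_pow two_ne_zero _).trans hm)
  set p := k - 2
  set s := (m - k + 2) / 2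
  have hs : 1 ≤ s := by omega
  have hpk : (p : ℝ) + 2 = k := by exact_mod_cast (show p + 2 = k by omega)
  have hmps : (m : ℝ) = p + 2 * s := by
    rw [← Nat.cast_ofNat, ← Nat.cast_mul, ← Nat.cast_add, Nat.cast_inj]
    omega
  refine ⟨?_, ?_, ?_⟩
  · have hdisc : 2 * (k : ℝ) ^ 2 - 2 * k * m + m ^ 2 - 8 * k + 4 * m + 8 = p ^ 2 + 4 * s ^ 2 := by
      rw [← hpk, hmps]; ring
    rw [Kbook.specRad_eq hs, hdisc, ← hmps, eq_div_iff two_ne_zero,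
      show 2 * (m : ℝ) + 2 * √(p ^ 2 + 4 * s ^ 2) = 2 ^ 2 * ((m + √(p ^ 2 + 4 * s ^ 2)) / 2) by ring,
      Real.sqrt_mul (by norm_num), Real.sqrt_sq two_pos.le, mul_comm]
  · convert Kbook.isGreatest_quartic_roots_specRad (p := p) hs using 4 with x
    rw [← hpk, hmps]
    ring
  · calc √((m : ℝ) - k) < √(2 * s) :=
          Real.sqrt_lt_sqrt (by simpa using hkm) (by linarith)
      _ ≤ specRad (Kbook p s) := Kbook.sqrt_two_mul_le_specRad hs
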